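/- arXiv:2306.00726 — 2 statements merged into one kernel-verified Lean document; each statement's English description precedes it below -/
import Mathlib

section
/- In the graph G constructed from a Set Cover instance with q ≥ 1, let 𝒞 ⊆ 𝒮 be a set cover of U, let σ : U → 𝒞 be a choice function with u ∈ σ(u) for every u ∈ U, and let A' := {(v_u, v^0_{σ(u)}) | u ∈ U} ∪ ⋃_{S ∈ 𝒞} P_S. Then for every linecard size k ≥ 1, the objective value satisfies obj_k(A') ≤ |𝒞| · q · ⌈2/k⌉ + 2 · (|𝒮| + Σ_{S ∈ 𝒮} |S|). -/
/-- Vertices of the graph constructed from a Set Cover instance with universe `U`,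
family of sets indexed by `ι`, and path-length parameter `q`:
`item u` is `v_u`, `path i j` is `v^j_{S_i}`, and `sink` is `z`. -/
inductive Vtx (U ι : Type) (q : ℕ) : Type where
  | item : U → Vtx U ι q
  | path : ι → Fin (q + 1) → Vtx U ι q
  | sink : Vtx U ι q
  deriving DecidableEq, Fintype

variable {U ι : Type} [Fintype U] [Fintype ι] [DecidableEq U] [DecidableEq ι]

/-- The arcs `A_U = {(v_u, v^0_S) | S ∈ 𝒮, u ∈ S}`. -/
def AU (Sets : ι → Finset U) (q : ℕ) : Finset (Vtx U ι q × Vtx U ι q) :=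
  Finset.univ.biUnion fun i => (Sets i).image fun u => (Vtx.item u, Vtx.path i 0)

/-- The path `P_S = {(v^0_S,v^1_S), …, (v^{q-1}_S,v^q_S), (v^q_S, z)}` for `S = S_i`. -/
def Ppath (U ι : Type) [DecidableEq U] [DecidableEq ι] (q : ℕ) (i : ι) :
    Finset (Vtx U ι q × Vtx U ι q) :=
  ((Finset.univ : Finset (Fin q)).image fun j =>
      ((Vtx.path i j.castSucc : Vtx U ι q), Vtx.path i j.succ)) ∪
    {(Vtx.path i (Fin.last q), Vtx.sink)}

/-- The arc set `A = A_U ∪ ⋃_{S ∈ 𝒮} P_S`. -/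
def arcs (Sets : ι → Finset U) (q : ℕ) : Finset (Vtx U ι q × Vtx U ι q) :=
  AU Sets q ∪ Finset.univ.biUnion (Ppath U ι q)

/-- There is a directed path from `x` to `y` all of whose arcs lie in `A'`. -/
def Reaches {α : Type} (A' : Finset (α × α)) (x y : α) : Prop :=
  Relation.ReflTransGen (fun a b => (a, b) ∈ A') x y

/-- `A' ⊆ A` is feasible if every `v_u` can reach `z` using only arcs of `A'`. -/
def Feasible {q : ℕ} (A' : Finset (Vtx U ι q × Vtx U ι q)) : Prop :=
  ∀ u : U, Reaches A' (Vtx.item u) Vtx.sink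

/-- The number of arcs of `B` incident to `v` (in-degree plus out-degree). -/
def deg {α : Type} [DecidableEq α] (B : Finset (α × α)) (v : α) : ℕ :=
  (B.filter fun a => a.1 = v).card + (B.filter fun a => a.2 = v).card

/-- The linecard objective `obj_k(B) = Σ_v ⌈deg_B(v)/k⌉`. -/
def obj {α : Type} [Fintype α] [DecidableEq α] (k : ℕ) (B : Finset (α × α)) : ℕ :=
  ∑ v : α, deg B v ⌈/⌉ k

private lemma myCeilDiv_le_self {d k : ℕ} (hk : 1 ≤ k) : d ⌈/⌉ k ≤ d := by
  rw [Nat.ceilDiv_eq_add_pred_div]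
  have h := (Nat.div_lt_iff_lt_mul (x := d + k - 1) (y := d + 1)
    (Nat.lt_of_lt_of_le one_pos hk)).mpr
  have h2 : (d + 1) * k = d * k + k := by ring
  have h3 : d * 1 ≤ d * k := Nat.mul_le_mul_left d hk
  omega

private lemma myCeilDiv_mono {a b k : ℕ} (h : a ≤ b) : a ⌈/⌉ k ≤ b ⌈/⌉ k := by
  rw [Nat.ceilDiv_eq_add_pred_div, Nat.ceilDiv_eq_add_pred_div]
  exact Nat.div_le_div_right (by omega)

/-- Equivalence used to split the sum over `Vtx`. -/
private def vtxEquiv (U ι : Type) (q : ℕ) : Vtx U ι q ≃ (U ⊕ ι × Fin (q + 1) ⊕ Unit) where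
  toFun v := match v with
    | .item u => Sum.inl u
    | .path i j => Sum.inr (Sum.inl (i, j))
    | .sink => Sum.inr (Sum.inr ())
  invFun x := match x with
    | Sum.inl u => .item u
    | Sum.inr (Sum.inl (i, j)) => .path i j
    | Sum.inr (Sum.inr _) => .sink
  left_inv v := by cases v <;> rfl
  right_inv x := by rcases x with u | ⟨i, j⟩ | ⟨⟩ <;> rfl

private lemma mem_Ppath_iff {q : ℕ} {i : ι} {a : Vtx U ι q × Vtx U ι q} :
    a ∈ Ppath U ι q i ↔
      (∃ j : Fin q, a = (Vtx.path i j.castSucc, Vtx.path i j.succ)) ∨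
        a = (Vtx.path i (Fin.last q), Vtx.sink) := by
  simp only [Ppath, Finset.mem_union, Finset.mem_image, Finset.mem_singleton,
    Finset.mem_univ, true_and]
  constructor
  · rintro (⟨j, rfl⟩ | rfl)
    · exact Or.inl ⟨j, rfl⟩
    · exact Or.inr rfl
  · rintro (⟨j, rfl⟩ | rfl)
    · exact Or.inl ⟨j, rfl⟩
    · exact Or.inr rfl

/-- In the graph `G` constructed from a Set Cover instance with `q ≥ 1`, let `𝒞 ⊆ 𝒮` be a
set cover of `U`, let `σ : U → 𝒞` be a choice function with `u ∈ σ(u)`, and let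
`A' := {(v_u, v^0_{σ(u)}) | u ∈ U} ∪ ⋃_{S ∈ 𝒞} P_S`. Then for every linecard size `k ≥ 1`,
`obj_k(A') ≤ |𝒞| · q · ⌈2/k⌉ + 2 · (|𝒮| + Σ_{S ∈ 𝒮} |S|)`. -/
theorem obj_upper_bound_of_cover (Sets : ι → Finset U) (q : ℕ) (hq : 1 ≤ q)
    (𝒞 : Finset ι) (hcov : ∀ u : U, ∃ i ∈ 𝒞, u ∈ Sets i)
    (σ : U → ι) (hσ𝒞 : ∀ u : U, σ u ∈ 𝒞) (hσ : ∀ u : U, u ∈ Sets (σ u))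
    (A' : Finset (Vtx U ι q × Vtx U ι q))
    (hA' : A' = (Finset.univ.image fun u : U => (Vtx.item u, Vtx.path (σ u) 0)) ∪
      𝒞.biUnion (Ppath U ι q))
    (k : ℕ) (hk : 1 ≤ k) :
    obj k A' ≤ 𝒞.card * q * (2 ⌈/⌉ k) + 2 * (Fintype.card ι + ∑ i : ι, (Sets i).card) := by
  -- membership description of A'
  have memA : ∀ a : Vtx U ι q × Vtx U ι q, a ∈ A' ↔
      (∃ u : U, a = (Vtx.item u, Vtx.path (σ u) 0)) ∨ ∃ i ∈ 𝒞, a ∈ Ppath U ι q i := by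
    intro a
    rw [hA']
    simp only [Finset.mem_union, Finset.mem_image, Finset.mem_biUnion, Finset.mem_univ, true_and]
    constructor
    · rintro (⟨u, rfl⟩ | h)
      · exact Or.inl ⟨u, rfl⟩
      · exact Or.inr h
    · rintro (⟨u, rfl⟩ | h)
      · exact Or.inl ⟨u, rfl⟩
      · exact Or.inr h
  set f : Vtx U ι q → ℕ := fun v => deg A' v ⌈/⌉ k with hf
  -- degree bound at items
  have hitem : ∀ u : U, f (Vtx.item u) ≤ 1 := by
    intro u
    have h2 : A'.filter (fun a => a.2 = Vtx.item u) = ∅ := by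
      rw [Finset.eq_empty_iff_forall_notMem]
      intro a ha
      rw [Finset.mem_filter] at ha
      obtain ⟨haA, htgt⟩ := ha
      rcases (memA a).mp haA with ⟨u', rfl⟩ | ⟨i, _, hp⟩
      · simp at htgt
      · rcases mem_Ppath_iff.mp hp with ⟨j, rfl⟩ | rfl <;> simp at htgt
    have h1 : A'.filter (fun a => a.1 = Vtx.item u) ⊆ {(Vtx.item u, Vtx.path (σ u) 0)} := by
      intro a ha
      rw [Finset.mem_filter] at ha
      obtain ⟨haA, hsrc⟩ := ha
      rcases (memA a).mp haA with ⟨u', rfl⟩ | ⟨i, _, hp⟩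
      · simp only at hsrc
        obtain rfl : u' = u := by simpa using hsrc
        simp
      · rcases mem_Ppath_iff.mp hp with ⟨j, rfl⟩ | rfl <;> simp at hsrc
    calc f (Vtx.item u) ≤ deg A' (Vtx.item u) := myCeilDiv_le_self hk
    _ ≤ 1 := by
        unfold deg
        rw [h2]
        simpa using Finset.card_le_card h1
  -- degree bound at path i 0
  have hpath0 : ∀ i : ι, f (Vtx.path i 0) ≤ 1 + (Sets i).card := by
    intro i
    have h1 : (A'.filter (fun a => a.1 = Vtx.path i 0)).card ≤ 1 := by
      rw [Finset.card_le_one]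
      have key : ∀ a ∈ A'.filter (fun a => a.1 = (Vtx.path i 0 : Vtx U ι q)),
          a = (Vtx.path i 0, Vtx.path i (Fin.mk 1 (by omega))) := by
        intro a ha
        rw [Finset.mem_filter] at ha
        obtain ⟨haA, hsrc⟩ := ha
        rcases (memA a).mp haA with ⟨u', rfl⟩ | ⟨i', _, hp⟩
        · simp at hsrc
        · rcases mem_Ppath_iff.mp hp with ⟨j, rfl⟩ | rfl
          · simp only [Prod.mk.injEq, Vtx.path.injEq] at hsrc ⊢
            obtain ⟨rfl, hj⟩ := hsrc
            have hj' : (j : ℕ) = 0 := by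
              have := congrArg Fin.val hj
              simpa using this
            refine ⟨⟨rfl, ?_⟩, rfl, ?_⟩ <;>
              · apply Fin.ext
                simp [hj']
          · exfalso
            simp only [Prod.mk.injEq, Vtx.path.injEq] at hsrc
            have := congrArg Fin.val hsrc.2
            simp [Fin.val_last] at this
            omega
      intro a ha b hb
      rw [key a ha, key b hb]
    have h2 : A'.filter (fun a => a.2 = Vtx.path i 0) ⊆
        (Sets i).image (fun u => (Vtx.item u, Vtx.path i 0)) := by
      intro a ha
      rw [Finset.mem_filter] at ha
      obtain ⟨haA, htgt⟩ := ha
      rcases (memA a).mp haA with ⟨u', rfl⟩ | ⟨i', _, hp⟩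
      · simp only [Prod.mk.injEq, Vtx.path.injEq] at htgt
        obtain ⟨rfl, -⟩ := htgt
        exact Finset.mem_image.mpr ⟨u', hσ u', rfl⟩
      · rcases mem_Ppath_iff.mp hp with ⟨j, rfl⟩ | rfl
        · exfalso
          simp only [Prod.mk.injEq, Vtx.path.injEq] at htgt
          exact Fin.succ_ne_zero j htgt.2
        · simp at htgt
    calc f (Vtx.path i 0) ≤ deg A' (Vtx.path i 0) := myCeilDiv_le_self hk
    _ ≤ 1 + (Sets i).card := by
        unfold deg
        have := (Finset.card_le_card h2).trans (Finset.card_image_le)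
        omega
  -- degree bound at path i (m.succ)
  have hpathS : ∀ (i : ι) (m : Fin q),
      f (Vtx.path i m.succ) ≤ if i ∈ 𝒞 then 2 ⌈/⌉ k else 0 := by
    intro i m
    by_cases hi : i ∈ 𝒞
    · rw [if_pos hi]
      have h1 : (A'.filter (fun a => a.1 = Vtx.path i m.succ)).card ≤ 1 := by
        rw [Finset.card_le_one]
        have key : ∀ a ∈ A'.filter (fun a => a.1 = (Vtx.path i m.succ : Vtx U ι q)),
            (∃ j : Fin q, (j : ℕ) = (m : ℕ) + 1 ∧
              a = (Vtx.path i j.castSucc, Vtx.path i j.succ)) ∨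
            ((m : ℕ) + 1 = q ∧ a = (Vtx.path i (Fin.last q), Vtx.sink)) := by
          intro a ha
          rw [Finset.mem_filter] at ha
          obtain ⟨haA, hsrc⟩ := ha
          rcases (memA a).mp haA with ⟨u', rfl⟩ | ⟨i', _, hp⟩
          · simp at hsrc
          · rcases mem_Ppath_iff.mp hp with ⟨j, rfl⟩ | rfl
            · simp only [Prod.mk.injEq, Vtx.path.injEq] at hsrc
              obtain ⟨rfl, hj⟩ := hsrc
              have hjv : (j : ℕ) = (m : ℕ) + 1 := by
                have := congrArg Fin.val hj
                simpa using this
              exact Or.inl ⟨j, hjv, rfl⟩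
            · simp only [Prod.mk.injEq, Vtx.path.injEq] at hsrc
              obtain ⟨rfl, hj⟩ := hsrc
              have : (m : ℕ) + 1 = q := by
                have := congrArg Fin.val hj
                simpa [Fin.val_last] using this.symm
              exact Or.inr ⟨this, rfl⟩
        intro a ha b hb
        rcases key a ha with ⟨j, hjv, rfl⟩ | ⟨hm, rfl⟩ <;>
          rcases key b hb with ⟨j', hjv', rfl⟩ | ⟨hm', rfl⟩
        · obtain rfl : j = j' := Fin.ext (by omega)
          rfl
        · exfalso; have := j.isLt; omega
        · exfalso; have := j'.isLt; omega
        · rfl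
      have h2 : (A'.filter (fun a => a.2 = Vtx.path i m.succ)).card ≤ 1 := by
        rw [Finset.card_le_one]
        have key : ∀ a ∈ A'.filter (fun a => a.2 = (Vtx.path i m.succ : Vtx U ι q)),
            a = (Vtx.path i m.castSucc, Vtx.path i m.succ) := by
          intro a ha
          rw [Finset.mem_filter] at ha
          obtain ⟨haA, htgt⟩ := ha
          rcases (memA a).mp haA with ⟨u', rfl⟩ | ⟨i', _, hp⟩
          · exfalso
            simp only [Prod.mk.injEq, Vtx.path.injEq] at htgt
            exact (Fin.succ_ne_zero m) htgt.2.symm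
          · rcases mem_Ppath_iff.mp hp with ⟨j, rfl⟩ | rfl
            · simp only [Prod.mk.injEq, Vtx.path.injEq] at htgt
              obtain ⟨rfl, hj⟩ := htgt
              obtain rfl : j = m := by
                apply Fin.ext
                have := congrArg Fin.val hj
                simpa using this
              rfl
            · simp at htgt
        intro a ha b hb
        rw [key a ha, key b hb]
      calc f (Vtx.path i m.succ) ≤ 2 ⌈/⌉ k := by
            apply myCeilDiv_mono
            unfold deg
            omega
      _ = 2 ⌈/⌉ k := rfl
    · rw [if_neg hi]
      have hempty : ∀ g : Vtx U ι q × Vtx U ι q → Vtx U ι q,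
          (g = Prod.fst ∨ g = Prod.snd) →
          A'.filter (fun a => g a = Vtx.path i m.succ) = ∅ := by
        intro g hg
        rw [Finset.eq_empty_iff_forall_notMem]
        intro a ha
        rw [Finset.mem_filter] at ha
        obtain ⟨haA, hge⟩ := ha
        rcases (memA a).mp haA with ⟨u', rfl⟩ | ⟨i', hi', hp⟩
        · rcases hg with rfl | rfl
          · simp at hge
          · simp only [Prod.mk.injEq, Vtx.path.injEq] at hge
            exact (Fin.succ_ne_zero m) hge.2.symm
        · have : i' = i := by
            rcases mem_Ppath_iff.mp hp with ⟨j, rfl⟩ | rfl <;> rcases hg with rfl | rfl <;>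
              simp only [Vtx.path.injEq] at hge <;> first | exact hge.1 | simp at hge
          exact hi (this ▸ hi')
      have e1 := hempty Prod.fst (Or.inl rfl)
      have e2 := hempty Prod.snd (Or.inr rfl)
      have : deg A' (Vtx.path i m.succ) = 0 := by
        unfold deg
        rw [e1, e2]
        simp
      rw [hf]
      simp only [this]
      simp [Nat.ceilDiv_eq_add_pred_div]
  -- degree bound at sink
  have hsink : f Vtx.sink ≤ Fintype.card ι := by
    have h1 : A'.filter (fun a => a.1 = Vtx.sink) = ∅ := by
      rw [Finset.eq_empty_iff_forall_notMem]
      intro a ha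
      rw [Finset.mem_filter] at ha
      obtain ⟨haA, hsrc⟩ := ha
      rcases (memA a).mp haA with ⟨u', rfl⟩ | ⟨i', _, hp⟩
      · simp at hsrc
      · rcases mem_Ppath_iff.mp hp with ⟨j, rfl⟩ | rfl <;> simp at hsrc
    have h2 : A'.filter (fun a => a.2 = Vtx.sink) ⊆
        𝒞.image (fun i => (Vtx.path i (Fin.last q), Vtx.sink)) := by
      intro a ha
      rw [Finset.mem_filter] at ha
      obtain ⟨haA, htgt⟩ := ha
      rcases (memA a).mp haA with ⟨u', rfl⟩ | ⟨i', hi', hp⟩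
      · simp at htgt
      · rcases mem_Ppath_iff.mp hp with ⟨j, rfl⟩ | rfl
        · simp at htgt
        · exact Finset.mem_image.mpr ⟨i', hi', rfl⟩
    calc f Vtx.sink ≤ deg A' Vtx.sink := myCeilDiv_le_self hk
    _ ≤ Fintype.card ι := by
        unfold deg
        rw [h1]
        have hb := (Finset.card_le_card h2).trans Finset.card_image_le
        have hc : 𝒞.card ≤ Fintype.card ι := by
          simpa using Finset.card_le_card (Finset.subset_univ 𝒞)
        simp only [Finset.card_empty]
        omega
  -- |U| ≤ ∑ |Sets i|
  have hU : Fintype.card U ≤ ∑ i : ι, (Sets i).card := by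
    have hinj : (Finset.univ : Finset U).card ≤ ((Finset.univ : Finset ι).sigma Sets).card := by
      apply Finset.card_le_card_of_injOn (fun u => (⟨σ u, u⟩ : Σ _ : ι, U))
      · intro u _
        exact Finset.mem_sigma.mpr ⟨Finset.mem_univ _, hσ u⟩
      · intro u _ u' _ h
        exact (Sigma.mk.inj_iff.mp h).2.eq
    rw [Finset.card_sigma] at hinj
    simpa using hinj
  -- split the sum
  have hsplit : obj k A' =
      (∑ u : U, f (Vtx.item u)) + ((∑ p : ι × Fin (q + 1), f (Vtx.path p.1 p.2)) + f Vtx.sink) := by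
    have he := Fintype.sum_equiv (vtxEquiv U ι q) f
      (fun x => f ((vtxEquiv U ι q).symm x))
      (fun v => by simp)
    rw [obj, show (∑ v : Vtx U ι q, deg A' v ⌈/⌉ k) = ∑ v : Vtx U ι q, f v from rfl, he,
      Fintype.sum_sum_type, Fintype.sum_sum_type]
    rfl
  rw [hsplit]
  have b1 : (∑ u : U, f (Vtx.item u)) ≤ ∑ i : ι, (Sets i).card := by
    calc (∑ u : U, f (Vtx.item u)) ≤ ∑ _u : U, 1 := Finset.sum_le_sum fun u _ => hitem u
    _ = Fintype.card U := by simp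
    _ ≤ _ := hU
  have b2 : (∑ p : ι × Fin (q + 1), f (Vtx.path p.1 p.2)) ≤
      (Fintype.card ι + ∑ i : ι, (Sets i).card) + 𝒞.card * q * (2 ⌈/⌉ k) := by
    rw [Fintype.sum_prod_type]
    calc ∑ i : ι, ∑ j : Fin (q + 1), f (Vtx.path i j)
        ≤ ∑ i : ι, ((1 + (Sets i).card) + q * (if i ∈ 𝒞 then 2 ⌈/⌉ k else 0)) := by
          apply Finset.sum_le_sum
          intro i _
          rw [Fin.sum_univ_succ]
          have : (∑ m : Fin q, f (Vtx.path i m.succ)) ≤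
              q * (if i ∈ 𝒞 then 2 ⌈/⌉ k else 0) := by
            calc (∑ m : Fin q, f (Vtx.path i m.succ)) ≤
                ∑ _m : Fin q, (if i ∈ 𝒞 then 2 ⌈/⌉ k else 0) :=
                  Finset.sum_le_sum fun m _ => hpathS i m
            _ = q * (if i ∈ 𝒞 then 2 ⌈/⌉ k else 0) := by
                  simp [Finset.sum_const, mul_comm]
          have h0 := hpath0 i
          omega
    _ = (Fintype.card ι + ∑ i : ι, (Sets i).card) + 𝒞.card * q * (2 ⌈/⌉ k) := by
        rw [Finset.sum_add_distrib, Finset.sum_add_distrib]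
        have : (∑ i : ι, q * (if i ∈ 𝒞 then 2 ⌈/⌉ k else 0)) = 𝒞.card * q * (2 ⌈/⌉ k) := by
          simp only [mul_ite, mul_zero]
          rw [Finset.sum_ite_mem, Finset.univ_inter, Finset.sum_const, smul_eq_mul]
          ring
        rw [this, Finset.sum_const, Finset.card_univ, smul_eq_mul, mul_one]
  omega
end

section
/- In the graph G constructed from a Set Cover instance, let A' ⊆ A be feasible, let 𝒞 := {S ∈ 𝒮 | P_S ⊆ A'}, and define the 'purified' arc set A'' := {(v_u, v^0_S) ∈ A' | S ∈ 𝒞} ∪ ⋃_{S ∈ 𝒞} P_S. Then A'' ⊆ A', A'' is feasible, every path P_S is either entirely contained in A'' or disjoint from A'', and for every linecard size k ≥ 1 one has obj_k(A'') ≤ obj_k(A'). -/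
variable {U ι : Type} [Fintype U] [Fintype ι] [DecidableEq U] [DecidableEq ι]

set_option linter.unusedSectionVars false

section Objective

variable {α : Type} [DecidableEq α] {B C : Finset (α × α)}

lemma deg_mono (h : B ⊆ C) (v : α) : deg B v ≤ deg C v :=
  Nat.add_le_add (Finset.card_le_card (Finset.filter_subset_filter _ h))
    (Finset.card_le_card (Finset.filter_subset_filter _ h))

lemma obj_mono [Fintype α] (h : B ⊆ C) (k : ℕ) : obj k B ≤ obj k C := by
  refine Finset.sum_le_sum fun v _ => ?_
  simp only [Nat.ceilDiv_eq_add_pred_div]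
  exact Nat.div_le_div_right (by have := deg_mono h v; omega)

end Objective

lemma Reaches.exists_head {α : Type} {B : Finset (α × α)} {x y : α}
    (h : Reaches B x y) (hxy : x ≠ y) : ∃ c, (x, c) ∈ B ∧ Reaches B c y := by
  rcases Relation.ReflTransGen.cases_head h with rfl | hc
  exacts [absurd rfl hxy, hc]

section Paths

variable {q : ℕ} {i i' : ι} {j : Fin (q + 1)} {c : Vtx U ι q}

lemma mem_Ppath {a : Vtx U ι q × Vtx U ι q} :
    a ∈ Ppath U ι q i ↔
      (∃ j : Fin q, a = (Vtx.path i j.castSucc, Vtx.path i j.succ)) ∨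
      a = (Vtx.path i (Fin.last q), Vtx.sink) := by
  simp [Ppath, eq_comm, or_comm]

lemma exists_fst_eq_path_of_mem_Ppath {a : Vtx U ι q × Vtx U ι q} (h : a ∈ Ppath U ι q i) :
    ∃ j, a.1 = Vtx.path i j := by
  rcases mem_Ppath.1 h with ⟨j, rfl⟩ | rfl
  exacts [⟨j.castSucc, rfl⟩, ⟨Fin.last q, rfl⟩]

lemma eq_of_mem_Ppath_of_mem_Ppath {a : Vtx U ι q × Vtx U ι q}
    (h : a ∈ Ppath U ι q i) (h' : a ∈ Ppath U ι q i') : i = i' := by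
  obtain ⟨j, hj⟩ := exists_fst_eq_path_of_mem_Ppath h
  obtain ⟨j', hj'⟩ := exists_fst_eq_path_of_mem_Ppath h'
  exact (Vtx.path.inj (hj.symm.trans hj')).1

lemma eq_succ_of_mem_Ppath {j : Fin q} (h : (Vtx.path i j.castSucc, c) ∈ Ppath U ι q i) :
    c = Vtx.path i j.succ := by
  rcases mem_Ppath.1 h with ⟨j', hj'⟩ | h
  · simp only [Prod.mk.injEq, Vtx.path.injEq, Fin.castSucc_inj] at hj'
    rw [hj'.2, hj'.1.2]
  · simp only [Prod.mk.injEq, Vtx.path.injEq] at h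
    exact absurd h.1.2 (Fin.castSucc_ne_last j)

lemma eq_sink_of_mem_Ppath (h : (Vtx.path i (Fin.last q), c) ∈ Ppath U ι q i) :
    c = Vtx.sink := by
  rcases mem_Ppath.1 h with ⟨j', hj'⟩ | h
  · simp only [Prod.mk.injEq, Vtx.path.injEq] at hj'
    exact absurd hj'.1.2.symm (Fin.castSucc_ne_last j')
  · exact (Prod.mk.inj h).2

lemma mem_Ppath_of_mem_arcs {Sets : ι → Finset U}
    (h : (Vtx.path i j, c) ∈ arcs Sets q) : (Vtx.path i j, c) ∈ Ppath U ι q i := by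
  simp only [arcs, AU, Finset.mem_union, Finset.mem_biUnion, Finset.mem_univ, true_and,
    Finset.mem_image, Prod.mk.injEq, reduceCtorEq, false_and, and_false, exists_false,
    false_or] at h
  obtain ⟨i', hi'⟩ := h
  obtain ⟨j', hj'⟩ := exists_fst_eq_path_of_mem_Ppath hi'
  obtain rfl := (Vtx.path.inj hj').1
  exact hi'

lemma exists_eq_path_zero_of_mem_arcs {Sets : ι → Finset U} {u : U}
    (h : (Vtx.item u, c) ∈ arcs Sets q) : ∃ i, c = Vtx.path i 0 := by
  simp only [arcs, AU, Finset.mem_union, Finset.mem_biUnion, Finset.mem_univ, true_and,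
    Finset.mem_image, Prod.mk.injEq] at h
  rcases h with ⟨i, -, -, -, rfl⟩ | ⟨i, hi⟩
  · exact ⟨i, rfl⟩
  · obtain ⟨j, hj⟩ := exists_fst_eq_path_of_mem_Ppath hi
    exact absurd hj (by simp)

/-- Inside `A`, the only arc leaving `v^j_S` is the next arc of `P_S`, so a route from
`v^0_S` to `z` has to use all of `P_S`. -/
lemma Ppath_subset_of_reaches {Sets : ι → Finset U} {A' : Finset (Vtx U ι q × Vtx U ι q)}
    (hA' : A' ⊆ arcs Sets q) (h : Reaches A' (Vtx.path i 0) Vtx.sink) :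
    Ppath U ι q i ⊆ A' := by
  have step : ∀ j, Reaches A' (Vtx.path i j) Vtx.sink →
      ∃ c, (Vtx.path i j, c) ∈ A' ∧ (Vtx.path i j, c) ∈ Ppath U ι q i ∧
        Reaches A' c Vtx.sink := fun j hj => by
    obtain ⟨c, hc, hcz⟩ := hj.exists_head (by simp)
    exact ⟨c, hc, mem_Ppath_of_mem_arcs (hA' hc), hcz⟩
  have reach : ∀ j, Reaches A' (Vtx.path i j) Vtx.sink := Fin.induction h fun j hj => by
    obtain ⟨c, -, hc, hcz⟩ := step _ hj
    rwa [eq_succ_of_mem_Ppath hc] at hcz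
  intro a ha
  rcases mem_Ppath.1 ha with ⟨j, rfl⟩ | rfl
  · obtain ⟨c, hcA, hc, -⟩ := step _ (reach j.castSucc)
    rwa [eq_succ_of_mem_Ppath hc] at hcA
  · obtain ⟨c, hcA, hc, -⟩ := step _ (reach (Fin.last q))
    rwa [eq_sink_of_mem_Ppath hc] at hcA

lemma reaches_sink_of_Ppath_subset {B : Finset (Vtx U ι q × Vtx U ι q)}
    (h : Ppath U ι q i ⊆ B) (j : Fin (q + 1)) : Reaches B (Vtx.path i j) Vtx.sink :=
  Fin.reverseInduction (.single (h (mem_Ppath.2 (.inr rfl))))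
    (fun j hj => .head (h (mem_Ppath.2 (.inl ⟨j, rfl⟩))) hj) j

end Paths

/-- In the graph `G` constructed from a Set Cover instance, let `A' ⊆ A` be feasible, let
`𝒞 := {S ∈ 𝒮 | P_S ⊆ A'}`, and define the purified arc set
`A'' := {(v_u, v^0_S) ∈ A' | S ∈ 𝒞} ∪ ⋃_{S ∈ 𝒞} P_S`. Then `A'' ⊆ A'`, `A''` is feasible,
every path `P_S` is either entirely contained in `A''` or disjoint from `A''`, and for every
linecard size `k ≥ 1` one has `obj_k(A'') ≤ obj_k(A')`. -/
theorem purification (Sets : ι → Finset U) (q : ℕ)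
    (A' : Finset (Vtx U ι q × Vtx U ι q)) (hA' : A' ⊆ arcs Sets q)
    (hfeas : Feasible A')
    (A'' : Finset (Vtx U ι q × Vtx U ι q))
    (hA'' : A'' =
      (A'.filter fun a => ∃ i : ι, Ppath U ι q i ⊆ A' ∧
        ∃ u : U, a = (Vtx.item u, Vtx.path i 0)) ∪
      (Finset.univ.filter fun i : ι => Ppath U ι q i ⊆ A').biUnion (Ppath U ι q)) :
    A'' ⊆ A' ∧ Feasible A'' ∧
    (∀ i : ι, Ppath U ι q i ⊆ A'' ∨ Disjoint (Ppath U ι q i) A'') ∧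
    ∀ k : ℕ, 1 ≤ k → obj k A'' ≤ obj k A' := by
  have hsub : A'' ⊆ A' := hA'' ▸ Finset.union_subset (Finset.filter_subset _ _)
    (Finset.biUnion_subset.2 fun i hi => (Finset.mem_filter.1 hi).2)
  have hPin : ∀ i, Ppath U ι q i ⊆ A' → Ppath U ι q i ⊆ A'' := fun i hi =>
    hA'' ▸ (Finset.subset_biUnion_of_mem (Ppath U ι q) (by simpa using hi)).trans
      Finset.subset_union_right
  refine ⟨hsub, fun u => ?_, fun i => ?_, fun k _ => obj_mono hsub k⟩
  · obtain ⟨c, hc, hcz⟩ := (hfeas u).exists_head (by simp)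
    obtain ⟨i, rfl⟩ := exists_eq_path_zero_of_mem_arcs (hA' hc)
    have hPi := Ppath_subset_of_reaches hA' hcz
    exact .head (hA'' ▸ Finset.mem_union_left _ (Finset.mem_filter.2 ⟨hc, i, hPi, u, rfl⟩))
      (reaches_sink_of_Ppath_subset (hPin i hPi) 0)
  · by_cases hi : Ppath U ι q i ⊆ A'
    · exact .inl (hPin i hi)
    refine .inr (Finset.disjoint_left.2 fun a ha ha'' => ?_)
    rw [hA''] at ha''
    rcases Finset.mem_union.1 ha'' with h | h
    · obtain ⟨-, _, -, u, rfl⟩ := Finset.mem_filter.1 h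
      obtain ⟨j, hj⟩ := exists_fst_eq_path_of_mem_Ppath ha
      exact absurd hj (by simp)
    · obtain ⟨i', hi', hai'⟩ := Finset.mem_biUnion.1 h
      obtain rfl := eq_of_mem_Ppath_of_mem_Ppath ha hai'
      exact hi (Finset.mem_filter.1 hi').2
end
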